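/- arXiv:1904.09600 — 5 statements merged into one kernel-verified Lean document; each statement's English description precedes it below -/
import Mathlib

section
/- Let Δ : M_n(ℂ) → M_{ns}(ℂ) send A to the block diagonal matrix with s copies of A, and let U, U' be ns×ns unitaries. Then Ad_U ∘ Δ = Ad_{U'} ∘ Δ (i.e. U Δ(A) U* = U' Δ(A) U'* for all A) if and only if there exists an s×s unitary V with U' = U · (V ⊗ I_n). -/
/-!
Conjugations by unitaries `U` and `U'` agree at `X` exactly when `W = Uᴴ U'` commutes with `X`, so
the hypothesis says that `W` lies in the commutant of `{I_s ⊗ A}`. Testing the commutation against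
`I_s ⊗ E_ab` for the matrix units `E_ab` forces every `n × n` block of `W` to be a scalar
multiple of the identity, i.e. `W = V ⊗ I_n`; and `V` is unitary because `W` is.
-/

open Matrix Kronecker

theorem Unitary.conj_eq_conj_iff_commute {R : Type*} [Monoid R] [StarMul R] {u v : R}
    (hu : u ∈ unitary R) (hv : v ∈ unitary R) (x : R) :
    u * x * star u = v * x * star v ↔ Commute (star u * v) x := by
  have hu₁ : ∀ y, star u * (u * y) = y := fun y => by
    rw [← mul_assoc, Unitary.star_mul_self_of_mem hu, one_mul]
  have hu₂ : ∀ y, u * (star u * y) = y := fun y => by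
    rw [← mul_assoc, Unitary.mul_star_self_of_mem hu, one_mul]
  constructor
  · intro h
    calc star u * v * x = star u * (v * x * star v) * v := by
          simp only [mul_assoc, Unitary.star_mul_self_of_mem hv, mul_one]
      _ = x * (star u * v) := by rw [← h]; simp only [mul_assoc, hu₁]
  · intro h
    calc u * x * star u = u * (x * (star u * v)) * star v := by
          simp only [mul_assoc, Unitary.mul_star_self_of_mem hv, mul_one]
      _ = v * x * star v := by rw [← h.eq]; simp only [mul_assoc, hu₂]

namespace Matrix

variable {ι κ R : Type*} [DecidableEq κ]

theorem kronecker_one_injective [MulZeroOneClass R] [Nonempty κ] :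
    Function.Injective fun V : Matrix ι ι R => V ⊗ₖ (1 : Matrix κ κ R) := by
  intro V V' h
  obtain ⟨k⟩ := ‹Nonempty κ›
  ext i j
  simpa using congrFun (congrFun h (i, k)) (j, k)

section

variable [Fintype ι] [Fintype κ] [DecidableEq ι]

theorem mul_one_kronecker_single_apply [Semiring R]
    (W : Matrix (ι × κ) (ι × κ) R) (a b : κ) (i j : ι) (p q : κ) :
    (W * ((1 : Matrix ι ι R) ⊗ₖ single a b (1 : R))) (i, p) (j, q) =
      if b = q then W (i, p) (j, a) else 0 := by
  simp [mul_apply, Fintype.sum_prod_type, one_apply, single_apply, ite_and]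

theorem one_kronecker_single_mul_apply [Semiring R]
    (W : Matrix (ι × κ) (ι × κ) R) (a b : κ) (i j : ι) (p q : κ) :
    ((1 : Matrix ι ι R) ⊗ₖ single a b (1 : R) * W) (i, p) (j, q) =
      if a = p then W (i, b) (j, q) else 0 := by
  simp [mul_apply, Fintype.sum_prod_type, one_apply, single_apply, ite_and]

theorem forall_commute_one_kronecker_iff [CommSemiring R] [Nonempty κ]
    {W : Matrix (ι × κ) (ι × κ) R} :
    (∀ A : Matrix κ κ R, Commute W ((1 : Matrix ι ι R) ⊗ₖ A)) ↔
      ∃ V : Matrix ι ι R, W = V ⊗ₖ (1 : Matrix κ κ R) := by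
  constructor
  · intro h
    have hentry a b i j p q : (if b = q then W (i, p) (j, a) else 0) =
        if a = p then W (i, b) (j, q) else 0 := by
      rw [← mul_one_kronecker_single_apply, ← one_kronecker_single_mul_apply, (h _).eq]
    obtain ⟨k⟩ := ‹Nonempty κ›
    refine ⟨of fun i j => W (i, k) (j, k), ?_⟩
    ext ⟨i, p⟩ ⟨j, q⟩
    rw [kronecker_apply, of_apply, one_apply]
    split_ifs with hpq
    · subst hpq
      simpa using hentry p k i j p k
    · simpa [Ne.symm hpq] using hentry q q i j p q
  · rintro ⟨V, rfl⟩ A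
    simp only [Commute, SemiconjBy, ← mul_kronecker_mul, mul_one, one_mul]

theorem kronecker_one_mem_unitary_iff [CommSemiring R] [StarRing R] [Nonempty κ]
    {V : Matrix ι ι R} :
    V ⊗ₖ (1 : Matrix κ κ R) ∈ unitary _ ↔ V ∈ unitary _ := by
  simp only [Unitary.mem_iff, star_eq_conjTranspose, conjTranspose_kronecker, conjTranspose_one,
    ← mul_kronecker_mul, mul_one, ← one_kronecker_one (m := ι) (n := κ) (α := R),
    kronecker_one_injective.eq_iff]

end

end Matrix

/-- Let `Δ(A) = I_s ⊗ A` be the block diagonal matrix consisting of `s` copies of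
    the `n×n` matrix `A`, and let `U, U'` be `ns×ns` unitaries.  Then
    `Ad_U ∘ Δ = Ad_{U'} ∘ Δ` iff there is an `s×s` unitary `V` with
    `U' = U · (V ⊗ I_n)`. -/
theorem adjoint_of_amplification_eq_iff (n s : ℕ)
    (U U' : Matrix (Fin s × Fin n) (Fin s × Fin n) ℂ)
    (hU : Uᴴ * U = 1) (hU' : U * Uᴴ = 1)
    (hU2 : U'ᴴ * U' = 1) (hU2' : U' * U'ᴴ = 1) :
    (∀ A : Matrix (Fin n) (Fin n) ℂ,
        U * ((1 : Matrix (Fin s) (Fin s) ℂ) ⊗ₖ A) * Uᴴ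
          = U' * ((1 : Matrix (Fin s) (Fin s) ℂ) ⊗ₖ A) * U'ᴴ)
      ↔ ∃ V : Matrix (Fin s) (Fin s) ℂ,
          Vᴴ * V = 1 ∧ V * Vᴴ = 1 ∧
          U' = U * (V ⊗ₖ (1 : Matrix (Fin n) (Fin n) ℂ)) := by
  rcases isEmpty_or_nonempty (Fin n) with hn | hn
  · exact iff_of_true (fun _ => Subsingleton.elim _ _)
      ⟨1, by simp, by simp, Subsingleton.elim _ _⟩
  have hu : U ∈ unitary _ := ⟨hU, hU'⟩
  have hu' : U' ∈ unitary _ := ⟨hU2, hU2'⟩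
  calc (∀ A : Matrix (Fin n) (Fin n) ℂ, _)
      ↔ ∀ A : Matrix (Fin n) (Fin n) ℂ, Commute (star U * U') (1 ⊗ₖ A) :=
        forall_congr' fun A => Unitary.conj_eq_conj_iff_commute hu hu' _
    _ ↔ ∃ V, star U * U' = V ⊗ₖ (1 : Matrix (Fin n) (Fin n) ℂ) :=
        forall_commute_one_kronecker_iff
    _ ↔ _ := exists_congr fun V => ?_
  have hW_iff : star U * U' = V ⊗ₖ 1 ↔ U' = U * (V ⊗ₖ 1) :=
    ⟨fun h => by rw [← h, ← mul_assoc, Unitary.mul_star_self_of_mem hu, one_mul],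
      fun h => by rw [h, ← mul_assoc, Unitary.star_mul_self_of_mem hu, one_mul]⟩
  rw [← and_assoc, ← hW_iff]
  have hWu : star U * U' ∈ unitary _ := mul_mem (Unitary.star_mem hu) hu'
  exact ⟨fun h => ⟨kronecker_one_mem_unitary_iff.1 (h ▸ hWu), h⟩, And.right⟩
end

section
/- Let n₁,…,n_k, s₁,…,s_k be natural numbers with Σᵢ sᵢnᵢ = p, and let π : ⊕ᵢ M_{nᵢ}(ℂ) → M_p(ℂ) be the map π(A₁,…,A_k) = (I_{s₁}⊗A₁) ⊕ … ⊕ (I_{s_k}⊗A_k) (block diagonal). If U is a p×p unitary with U π(A) Uᴴ = π(A) for all A = (A₁,…,A_k), then U is block diagonal: U = U₁ ⊕ … ⊕ U_k with each Uᵢ an sᵢnᵢ×sᵢnᵢ unitary. -/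
open Matrix Kronecker

/-- Let `π(A₁,…,A_k) = (I_{s₁}⊗A₁) ⊕ … ⊕ (I_{s_k}⊗A_k)` (block diagonal, with
    `Σᵢ sᵢnᵢ = p` realized by the index type `Σ i, Fin (s i) × Fin (n i)`).
    If a unitary `U` satisfies `U π(A) Uᴴ = π(A)` for all `A`, then `U` is
    block diagonal, `U = U₁ ⊕ … ⊕ U_k`, with each `Uᵢ` unitary. -/
theorem commutant_of_amplified_blocks (k : ℕ) (n s : Fin k → ℕ)
    (U : Matrix (Σ i : Fin k, Fin (s i) × Fin (n i))
                (Σ i : Fin k, Fin (s i) × Fin (n i)) ℂ)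
    (hU : Uᴴ * U = 1) (hU' : U * Uᴴ = 1)
    (h : ∀ A : ∀ i : Fin k, Matrix (Fin (n i)) (Fin (n i)) ℂ,
        U * Matrix.blockDiagonal'
              (fun i => (1 : Matrix (Fin (s i)) (Fin (s i)) ℂ) ⊗ₖ A i) * Uᴴ
          = Matrix.blockDiagonal'
              (fun i => (1 : Matrix (Fin (s i)) (Fin (s i)) ℂ) ⊗ₖ A i)) :
    ∃ Us : ∀ i : Fin k, Matrix (Fin (s i) × Fin (n i)) (Fin (s i) × Fin (n i)) ℂ,
      (∀ i, (Us i)ᴴ * Us i = 1 ∧ Us i * (Us i)ᴴ = 1) ∧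
      U = Matrix.blockDiagonal' Us := by
  classical
  -- Off-diagonal blocks of `U` vanish.
  have key : ∀ (i j : Fin k) (a : Fin (s i) × Fin (n i)) (b : Fin (s j) × Fin (n j)),
      i ≠ j → U ⟨i, a⟩ ⟨j, b⟩ = 0 := by
    intro i j a b hij
    set A : ∀ l : Fin k, Matrix (Fin (n l)) (Fin (n l)) ℂ :=
      fun l => if l = j then 1 else 0 with hA
    set P := Matrix.blockDiagonal'
        (fun l => (1 : Matrix (Fin (s l)) (Fin (s l)) ℂ) ⊗ₖ A l) with hP
    have hcomm : U * P = P * U := by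
      have h1 := h A
      calc U * P = U * P * (Uᴴ * U) := by rw [hU, mul_one]
        _ = (U * P * Uᴴ) * U := by rw [Matrix.mul_assoc (U * P)]
        _ = P * U := by rw [h1]
    have hPcol : ∀ y, P y ⟨j, b⟩ = if y = ⟨j, b⟩ then 1 else 0 := by
      rintro ⟨l, c⟩
      by_cases hl : l = j
      · subst hl
        rw [hP, Matrix.blockDiagonal'_apply_eq]
        simp only [hA, if_pos rfl, Matrix.one_kronecker_one]
        simp [Matrix.one_apply, Sigma.mk.inj_iff]
      · rw [hP, Matrix.blockDiagonal'_apply_ne _ _ _ hl]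
        simp [Sigma.mk.inj_iff, hl]
    have hProw : ∀ y, P ⟨i, a⟩ y = 0 := by
      rintro ⟨l, c⟩
      by_cases hl : i = l
      · subst hl
        simp [hP, hA, hij, Matrix.blockDiagonal'_apply, Matrix.kronecker_zero]
      · simp [hP, Matrix.blockDiagonal'_apply, hl]
    have h2 := congrFun (congrFun hcomm ⟨i, a⟩) ⟨j, b⟩
    rw [Matrix.mul_apply, Matrix.mul_apply] at h2
    simp only [hPcol, hProw, mul_ite, mul_one, mul_zero, zero_mul,
      Finset.sum_ite_eq', Finset.mem_univ, if_true, Finset.sum_const_zero] at h2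
    exact h2
  have hblock : U = Matrix.blockDiagonal'
      (fun i => Matrix.of fun a b => U ⟨i, a⟩ ⟨i, b⟩) := by
    ext ⟨i, a⟩ ⟨j, b⟩
    by_cases hij : i = j
    · subst hij; simp [Matrix.blockDiagonal'_apply]
    · simp [Matrix.blockDiagonal'_apply, hij, key i j a b hij]
  refine ⟨_, fun i => ?_, hblock⟩
  have h1 : Matrix.blockDiagonal'
      (fun i => (Matrix.of fun a b => U ⟨i, a⟩ ⟨i, b⟩ : Matrix _ _ ℂ)ᴴ *
        Matrix.of fun a b => U ⟨i, a⟩ ⟨i, b⟩) = Matrix.blockDiagonal' (fun _ => 1) := by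
    rw [Matrix.blockDiagonal'_mul, ← Matrix.blockDiagonal'_conjTranspose, ← hblock,
      hU]
    exact Matrix.blockDiagonal'_one.symm
  have h2 : Matrix.blockDiagonal'
      (fun i => (Matrix.of fun a b => U ⟨i, a⟩ ⟨i, b⟩ : Matrix _ _ ℂ) *
        (Matrix.of fun a b => U ⟨i, a⟩ ⟨i, b⟩)ᴴ) = Matrix.blockDiagonal' (fun _ => 1) := by
    rw [Matrix.blockDiagonal'_mul, ← Matrix.blockDiagonal'_conjTranspose, ← hblock,
      hU']
    exact Matrix.blockDiagonal'_one.symm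
  exact ⟨congrFun (Matrix.blockDiagonal'_injective h1) i,
    congrFun (Matrix.blockDiagonal'_injective h2) i⟩
end

section
/- A linear map f : M_n(ℂ) → M_m(ℂ) is completely positive if and only if there exist finitely many n×m matrices Vᵢ such that f(A) = Σᵢ Vᵢᴴ A Vᵢ for all A. (Choi's theorem.) -/
open Matrix
open scoped ComplexOrder

/-- A linear map `f : M_α(ℂ) → M_β(ℂ)` is completely positive if for every `k`
    the map `id_{M_k(ℂ)} ⊗ f` is positive, i.e. it sends positive semidefinite
    elements of `M_k(ℂ) ⊗ M_α(ℂ) ≅ M_{Fin k × α}(ℂ)` to positive semidefinite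
    elements of `M_{Fin k × β}(ℂ)`. -/
def IsCompletelyPositive {α β : Type*} [Fintype α] [Fintype β]
    (f : Matrix α α ℂ →ₗ[ℂ] Matrix β β ℂ) : Prop :=
  ∀ (k : ℕ) (M : Matrix (Fin k × α) (Fin k × α) ℂ), M.PosSemidef →
    (Matrix.of fun (x y : Fin k × β) =>
        f (Matrix.of fun i j => M (x.1, i) (y.1, j)) x.2 y.2).PosSemidef

/-!
Applying `id ⊗ f` to the rank-one projection onto the maximally entangled vector `∑ᵢ eᵢ ⊗ eᵢ`
yields the Choi matrix `C = ∑ᵢⱼ Eᵢⱼ ⊗ f(Eᵢⱼ)`, so `C` is positive semidefinite when `f` is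
completely positive. Writing `C = ∑ₛ vₛ vₛᴴ` and reading each conjugate vector `v̄ₛ` as an
`n × m` matrix gives the Kraus operators, since `f` is determined by `C`. Conversely,
`id_k ⊗ (A ↦ Vᴴ A V)` is conjugation by `1 ⊗ V`, which preserves positivity.
-/

open scoped Kronecker

namespace Matrix

variable {α β ι R : Type*} [Fintype α]

lemma conjTranspose_mul_mul_apply [NonUnitalSemiring R] [StarRing R]
    (V : Matrix α β R) (A : Matrix α α R) (x y : β) :
    (Vᴴ * A * V) x y = ∑ i, ∑ j, star (V i x) * A i j * V j y := by
  simp only [mul_apply, conjTranspose_apply, Finset.sum_mul]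
  exact Finset.sum_comm

lemma conjTranspose_one_kronecker_mul_mul_apply [Fintype ι] [DecidableEq ι] [CommSemiring R]
    [StarRing R] (V : Matrix α β R) (M : Matrix (ι × α) (ι × α) R) (a b : ι) (x y : β) :
    (((1 : Matrix ι ι R) ⊗ₖ V)ᴴ * M * ((1 : Matrix ι ι R) ⊗ₖ V)) (a, x) (b, y) =
      (Vᴴ * (of fun i j => M (a, i) (b, j)) * V) x y := by
  simp [conjTranspose_mul_mul_apply, Fintype.sum_prod_type, one_apply, apply_ite (star : R → R),
    ite_mul]

end Matrix

lemma isCompletelyPositive_of_eq_sum_conjTranspose_mul_mul {α β ι : Type*} [Fintype α]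
    [Fintype β] [Fintype ι] (f : Matrix α α ℂ →ₗ[ℂ] Matrix β β ℂ) (V : ι → Matrix α β ℂ)
    (hV : ∀ A, f A = ∑ s, (V s)ᴴ * A * V s) : IsCompletelyPositive f := by
  intro k M hM
  let W (s : ι) : Matrix (Fin k × α) (Fin k × β) ℂ := 1 ⊗ₖ V s
  have hampl : (of fun (x y : Fin k × β) => f (of fun i j => M (x.1, i) (y.1, j)) x.2 y.2) =
      ∑ s, (W s)ᴴ * M * W s := by
    ext ⟨a, x⟩ ⟨b, y⟩
    simp only [of_apply, hV, Matrix.sum_apply, W, conjTranspose_one_kronecker_mul_mul_apply]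
  rw [hampl]
  exact posSemidef_sum _ fun s _ => hM.conjTranspose_mul_mul_same _

section Choi

variable {α β : Type*} [Fintype α] [DecidableEq α]

def choiMatrix (f : Matrix α α ℂ →ₗ[ℂ] Matrix β β ℂ) : Matrix (α × β) (α × β) ℂ :=
  of fun p q => f (single p.1 q.1 1) p.2 q.2

lemma apply_eq_sum_choiMatrix (f : Matrix α α ℂ →ₗ[ℂ] Matrix β β ℂ) (A : Matrix α α ℂ)
    (x y : β) : f A x y = ∑ i, ∑ j, A i j * choiMatrix f (i, x) (j, y) := by
  have hsingle (i j : α) : single i j (A i j) = A i j • single i j 1 := by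
    rw [smul_single, smul_eq_mul, mul_one]
  conv_lhs => rw [matrix_eq_sum_single A]
  simp only [hsingle, map_sum, map_smul, Matrix.sum_apply, Matrix.smul_apply, smul_eq_mul,
    choiMatrix, of_apply]

lemma eq_sum_conjTranspose_mul_mul_of_choiMatrix_eq_sum {t : ℕ}
    (f : Matrix α α ℂ →ₗ[ℂ] Matrix β β ℂ) (v : Fin t → α × β → ℂ)
    (hv : choiMatrix f = ∑ s, vecMulVec (v s) (star (v s))) (A : Matrix α α ℂ) :
    f A = ∑ s, (of fun i x => star (v s (i, x)))ᴴ * A * of fun i x => star (v s (i, x)) := by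
  ext x y
  simp only [apply_eq_sum_choiMatrix f A, hv, Matrix.sum_apply, conjTranspose_mul_mul_apply,
    vecMulVec_apply, of_apply, Pi.star_apply, star_star, Finset.mul_sum]
  conv_lhs => enter [2, i]; rw [Finset.sum_comm]
  rw [Finset.sum_comm]
  exact Finset.sum_congr rfl fun s _ => Finset.sum_congr rfl fun i _ =>
    Finset.sum_congr rfl fun j _ => by ring

lemma posSemidef_choiMatrix [Fintype β] {n : ℕ}
    {f : Matrix (Fin n) (Fin n) ℂ →ₗ[ℂ] Matrix β β ℂ} (hf : IsCompletelyPositive f) :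
    (choiMatrix f).PosSemidef := by
  let ω : Fin n × Fin n → ℂ := fun p => if p.1 = p.2 then 1 else 0
  have hblock (a b : Fin n) :
      (of fun i j => vecMulVec ω (star ω) (a, i) (b, j)) = single a b 1 := by
    ext i j
    by_cases ha : a = i <;> by_cases hb : b = j <;> simp [ω, vecMulVec_apply, ha, hb]
  simpa [choiMatrix, hblock] using hf n _ (posSemidef_vecMulVec_self_star ω)

end Choi

/-- Choi's theorem: a linear map `f : M_n(ℂ) → M_m(ℂ)` is completely positive
    iff `f(A) = Σᵢ Vᵢᴴ A Vᵢ` for finitely many `n×m` matrices `Vᵢ`. -/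
theorem choi_characterization (n m : ℕ)
    (f : Matrix (Fin n) (Fin n) ℂ →ₗ[ℂ] Matrix (Fin m) (Fin m) ℂ) :
    IsCompletelyPositive f ↔
      ∃ (t : ℕ) (V : Fin t → Matrix (Fin n) (Fin m) ℂ),
        ∀ A, f A = ∑ i, (V i)ᴴ * A * V i := by
  constructor
  · intro hf
    obtain ⟨t, v, hv⟩ := posSemidef_iff_eq_sum_vecMulVec.mp (posSemidef_choiMatrix hf)
    exact ⟨t, _, eq_sum_conjTranspose_mul_mul_of_choiMatrix_eq_sum f v hv⟩
  · rintro ⟨t, V, hV⟩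
    exact isCompletelyPositive_of_eq_sum_conjTranspose_mul_mul f V hV
end

section
/- Bratteli's characterization: a unital *-homomorphism f : ⊕_{i=1}^{k} M_{nᵢ}(ℂ) → M_p(ℂ) exists if and only if there are a p×p unitary U and natural numbers s₁,…,s_k with Σᵢ nᵢsᵢ = p such that f(A₁,…,A_k) = U ((A₁ ⊗ I_{s₁}) ⊕ … ⊕ (A_k ⊗ I_{s_k})) Uᴴ for all (A₁,…,A_k). -/
/-!
Write `E^i_{ab}` for the matrix units of `⊕ᵢ M_{nᵢ}(ℂ)`. For a unital *-homomorphism `φ`, each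
`φ(E^i_{00})` is an orthogonal projection, hence equals `Vᵢ Vᵢᴴ` for an isometry `Vᵢ` with `sᵢ`
columns. The matrix `W` whose columns are those of the `φ(E^i_{a0}) Vᵢ` satisfies
`Wᴴ φ(A) W = ⊕ᵢ Aᵢ ⊗ I_{sᵢ}` by the matrix-unit relations, so it is an isometry; and
`trace φ(E^i_{aa}) = trace φ(E^i_{00}) = sᵢ` summed over `φ(1) = ∑ φ(E^i_{aa})` gives
`∑ nᵢ sᵢ = p`, so `W` is square, hence unitary. Conversely, `A ↦ ⊕ᵢ Aᵢ ⊗ I_{sᵢ}` and unitary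
conjugation are unital *-homomorphisms.
-/

open Matrix Kronecker

namespace Matrix

lemma submatrix_one_mul_conjTranspose {α m l : Type*} [NonAssocSemiring α] [StarRing α]
    [DecidableEq m] [Fintype l] {g : l → m} (hg : Function.Injective g) :
    (1 : Matrix m m α).submatrix id g * ((1 : Matrix m m α).submatrix id g)ᴴ =
      diagonal fun x => if x ∈ Set.range g then 1 else 0 := by
  ext x y
  simp only [mul_apply, submatrix_apply, id, conjTranspose_apply, one_apply, diagonal_apply]
  by_cases hxy : x = y
  · subst hxy
    by_cases hx : x ∈ Set.range g
    · obtain ⟨t, rfl⟩ := hx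
      rw [Finset.sum_eq_single t (fun b _ hb => by simp [hg.ne (Ne.symm hb)]) (by simp)]
      simp
    · simp_all [eq_comm]
  · refine (Finset.sum_eq_zero fun t _ => ?_).trans (if_neg hxy).symm
    split_ifs with h1 h2 <;> simp_all

end Matrix

theorem IsStarProjection.exists_isometry_mul_conjTranspose_eq {𝕜 m : Type*} [RCLike 𝕜]
    [Fintype m] [DecidableEq m] {Q : Matrix m m 𝕜} (hQ : IsStarProjection Q) :
    ∃ (s : ℕ) (V : Matrix m (Fin s) 𝕜), Vᴴ * V = 1 ∧ V * Vᴴ = Q := by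
  have hH : Q.IsHermitian := hQ.isSelfAdjoint
  set u := hH.eigenvectorUnitary
  set d : m → 𝕜 := RCLike.ofReal ∘ hH.eigenvalues
  have hd : ∀ j, d j = 0 ∨ d j = 1 := by
    intro j
    have hidem := hQ.isIdempotentElem.map (Unitary.conjStarAlgAut 𝕜 _ (star u))
    rw [hH.conjStarAlgAut_star_eigenvectorUnitary, IsIdempotentElem,
      diagonal_mul_diagonal] at hidem
    exact IsIdempotentElem.iff_eq_zero_or_one.1 (congr_fun (diagonal_injective hidem) j)
  -- `V` will consist of the eigenvectors of `Q` with eigenvalue `1`.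
  let g : Fin (Fintype.card {j // d j = 1}) → m :=
    Subtype.val ∘ (Fintype.equivFin {j // d j = 1}).symm
  have hg : Function.Injective g := Subtype.val_injective.comp (Equiv.injective _)
  set P := (1 : Matrix m m 𝕜).submatrix id g
  have hP : Pᴴ * P = 1 := by
    rw [conjTranspose_submatrix, conjTranspose_one,
      ← submatrix_mul _ _ _ _ _ Function.bijective_id]
    simpa using submatrix_one g hg
  have hPP : P * Pᴴ = diagonal d := by
    rw [submatrix_one_mul_conjTranspose hg]
    congr 1
    ext j
    have hrange : j ∈ Set.range g ↔ d j = 1 := by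
      simp [g, (Fintype.equivFin _).symm.surjective.range_comp]
    rcases hd j with h | h <;> simp [hrange, h]
  refine ⟨_, (u : Matrix m m 𝕜) * P, ?_, ?_⟩
  · rw [conjTranspose_mul, Matrix.mul_assoc, ← Matrix.mul_assoc _ (u : Matrix m m 𝕜),
      ← star_eq_conjTranspose, Unitary.coe_star_mul_self, Matrix.one_mul, hP]
  · rw [conjTranspose_mul, Matrix.mul_assoc, ← Matrix.mul_assoc P, hPP]
    conv_rhs => rw [hH.spectral_theorem]
    rw [Unitary.conjStarAlgAut_apply, Matrix.mul_assoc, star_eq_conjTranspose]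

namespace Pi

variable {ι : Type*} [DecidableEq ι] {α : ι → Type*} [∀ i, MulZeroClass (α i)]

lemma single_mul_mul_single_self (i : ι) (x y : α i) (f : ∀ i, α i) :
    single i x * f * single i y = single i (x * f i * y) := by
  rw [← single_mul_left, ← single_mul]

lemma single_mul_mul_single_of_ne {i j : ι} (hij : i ≠ j) (x : α i) (y : α j) (f : ∀ i, α i) :
    single i x * f * single j y = 0 := by
  ext l
  by_cases hl : l = i
  · subst hl; simp [hij]
  · simp [hl]

end Pi

section PiMatrixUnit

variable {R ι : Type*} [CommSemiring R] [DecidableEq ι] {d : ι → Type*} [∀ i, DecidableEq (d i)]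

variable (R) in
def piMatrixUnit (i : ι) (a b : d i) : ∀ i, Matrix (d i) (d i) R :=
  Pi.single i (single a b 1)

lemma piMatrixUnit_mul_piMatrixUnit [∀ i, Fintype (d i)] (i : ι) (a b c : d i) :
    piMatrixUnit R i a b * piMatrixUnit R i b c = piMatrixUnit R i a c := by
  rw [piMatrixUnit, piMatrixUnit, ← Pi.single_mul, single_mul_single_same, one_mul,
    piMatrixUnit]

lemma piMatrixUnit_mul_mul_piMatrixUnit_self [∀ i, Fintype (d i)] (i : ι) (a b c e : d i)
    (A : ∀ i, Matrix (d i) (d i) R) :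
    piMatrixUnit R i a b * A * piMatrixUnit R i c e = A i b c • piMatrixUnit R i a e := by
  rw [piMatrixUnit, piMatrixUnit, Pi.single_mul_mul_single_self, single_mul_mul_single,
    piMatrixUnit, ← Pi.single_smul, smul_single, smul_eq_mul, one_mul, mul_one]

lemma piMatrixUnit_mul_mul_piMatrixUnit_of_ne [∀ i, Fintype (d i)] {i j : ι} (hij : i ≠ j)
    (a b : d i) (c e : d j) (A : ∀ i, Matrix (d i) (d i) R) :
    piMatrixUnit R i a b * A * piMatrixUnit R j c e = 0 :=
  Pi.single_mul_mul_single_of_ne hij _ _ A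

lemma star_piMatrixUnit [StarRing R] (i : ι) (a b : d i) :
    star (piMatrixUnit R i a b) = piMatrixUnit R i b a := by
  rw [piMatrixUnit, ← Pi.single_star, star_eq_conjTranspose, conjTranspose_single, star_one,
    piMatrixUnit]

lemma isStarProjection_piMatrixUnit [StarRing R] [∀ i, Fintype (d i)] (i : ι) (a : d i) :
    IsStarProjection (piMatrixUnit R i a a) :=
  ⟨piMatrixUnit_mul_piMatrixUnit i a a a, star_piMatrixUnit i a a⟩

lemma sum_piMatrixUnit_self [Fintype ι] [∀ i, Fintype (d i)] :
    ∑ i, ∑ a, piMatrixUnit R i a a = (1 : ∀ i, Matrix (d i) (d i) R) := by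
  have hsum (i : ι) : ∑ a, piMatrixUnit R i a a = Pi.single i (1 : Matrix (d i) (d i) R) := by
    rw [← sum_single_one]
    exact (map_sum (AddMonoidHom.single (fun i => Matrix (d i) (d i) R) i) _ _).symm
  simp_rw [hsum]
  exact Finset.univ_sum_single 1

end PiMatrixUnit

section BlockAmpliation

variable {R ι : Type*} [CommSemiring R] [DecidableEq ι] {d : ι → Type*}

def blockAmpliation (s : ι → ℕ) (A : ∀ i, Matrix (d i) (d i) R) :
    Matrix (Σ i, d i × Fin (s i)) (Σ i, d i × Fin (s i)) R :=
  blockDiagonal' fun i => A i ⊗ₖ (1 : Matrix (Fin (s i)) (Fin (s i)) R)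

lemma blockAmpliation_mul [Fintype ι] [∀ i, Fintype (d i)] (s : ι → ℕ)
    (A B : ∀ i, Matrix (d i) (d i) R) :
    blockAmpliation s (A * B) = blockAmpliation s A * blockAmpliation s B := by
  simp only [blockAmpliation, ← blockDiagonal'_mul, Pi.mul_apply, ← mul_kronecker_mul, one_mul]

lemma blockAmpliation_star [StarRing R] (s : ι → ℕ) (A : ∀ i, Matrix (d i) (d i) R) :
    blockAmpliation s (star A) = (blockAmpliation s A)ᴴ := by
  simp only [blockAmpliation, blockDiagonal'_conjTranspose, conjTranspose_kronecker,
    conjTranspose_one, Pi.star_apply, star_eq_conjTranspose]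

lemma blockAmpliation_one [∀ i, DecidableEq (d i)] (s : ι → ℕ) :
    blockAmpliation s (1 : ∀ i, Matrix (d i) (d i) R) = 1 := by
  simp only [blockAmpliation, Pi.one_apply, one_kronecker_one]
  exact blockDiagonal'_one

theorem map_mul_star_one_of_eq_conj_blockAmpliation [StarRing R] [Fintype ι]
    [∀ i, Fintype (d i)] [∀ i, DecidableEq (d i)] {P : Type*} [Fintype P]
    [DecidableEq P] {f : (∀ i, Matrix (d i) (d i) R) → Matrix P P R} {s : ι → ℕ}
    {e : (Σ i, d i × Fin (s i)) ≃ P} {U : Matrix P P R} (hU1 : Uᴴ * U = 1) (hU2 : U * Uᴴ = 1)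
    (hf : ∀ A, f A = U * (blockAmpliation s A).submatrix e.symm e.symm * Uᴴ) :
    (∀ A B, f (A * B) = f A * f B) ∧ (∀ A, f (star A) = (f A)ᴴ) ∧ f 1 = 1 := by
  let u : unitary (Matrix P P R) := ⟨U, Unitary.mem_iff.2 ⟨hU1, hU2⟩⟩
  have hf' (A) : f A = Unitary.conjStarAlgAut R _ u
      ((blockAmpliation s A).submatrix e.symm e.symm) := hf A
  refine ⟨fun A B => ?_, fun A => ?_, ?_⟩
  · rw [hf', hf', hf', blockAmpliation_mul, ← submatrix_mul_equiv _ _ _ e.symm, map_mul]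
  · rw [hf', hf', blockAmpliation_star, ← conjTranspose_submatrix, ← star_eq_conjTranspose,
      map_star, star_eq_conjTranspose]
  · rw [hf', blockAmpliation_one, submatrix_one_equiv, map_one]

end BlockAmpliation

section Forward

variable {k : ℕ} {n : Fin k → ℕ} {m : Type*} [Fintype m] [DecidableEq m]
  (φ : (∀ i : Fin k, Matrix (Fin (n i)) (Fin (n i)) ℂ) →⋆ₐ[ℂ] Matrix m m ℂ)

def blockIsometry {s : Fin k → ℕ} (V : ∀ i, Matrix m (Fin (s i)) ℂ) :
    Matrix m (Σ i, Fin (n i) × Fin (s i)) ℂ :=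
  of fun x c => (φ (piMatrixUnit ℂ c.1 c.2.1 ⟨0, c.2.1.pos⟩) * V c.1) x c.2.2

variable {φ} {s : Fin k → ℕ} {V : ∀ i, Matrix m (Fin (s i)) ℂ}

theorem conjTranspose_blockIsometry_mul_mul (hV : ∀ i, (V i)ᴴ * V i = 1)
    (hQ : ∀ i (h : 0 < n i), V i * (V i)ᴴ = φ (piMatrixUnit ℂ i ⟨0, h⟩ ⟨0, h⟩))
    (A : ∀ i : Fin k, Matrix (Fin (n i)) (Fin (n i)) ℂ) :
    (blockIsometry φ V)ᴴ * φ A * blockIsometry φ V = blockAmpliation s A := by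
  ext ⟨i, a, t⟩ ⟨j, b, u⟩
  have hentry : ((blockIsometry φ V)ᴴ * φ A * blockIsometry φ V) ⟨i, a, t⟩ ⟨j, b, u⟩ =
      ((V i)ᴴ * φ (piMatrixUnit ℂ i ⟨0, a.pos⟩ a * A * piMatrixUnit ℂ j b ⟨0, b.pos⟩) * V j)
        t u := by
    have hcols : ((blockIsometry φ V)ᴴ * φ A * blockIsometry φ V) ⟨i, a, t⟩ ⟨j, b, u⟩ =
        ((φ (piMatrixUnit ℂ i a ⟨0, a.pos⟩) * V i)ᴴ * φ A *
          (φ (piMatrixUnit ℂ j b ⟨0, b.pos⟩) * V j)) t u := by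
      simp only [blockIsometry, mul_apply, conjTranspose_apply, of_apply]
    rw [hcols, conjTranspose_mul, ← star_eq_conjTranspose (φ _), ← map_star, star_piMatrixUnit,
      map_mul, map_mul]
    simp only [Matrix.mul_assoc]
  rw [hentry, blockAmpliation]
  by_cases hij : i = j
  · subst hij
    rw [piMatrixUnit_mul_mul_piMatrixUnit_self, map_smul, ← hQ, Matrix.mul_smul, Matrix.smul_mul,
      ← Matrix.mul_assoc (V i)ᴴ, hV, Matrix.one_mul, hV, blockDiagonal'_apply_eq, kronecker_apply,
      Matrix.smul_apply, smul_eq_mul]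
  · rw [piMatrixUnit_mul_mul_piMatrixUnit_of_ne hij, map_zero, Matrix.mul_zero, Matrix.zero_mul,
      blockDiagonal'_apply_ne _ _ _ hij]
    rfl

theorem trace_map_piMatrixUnit_self (hV : ∀ i, (V i)ᴴ * V i = 1)
    (hQ : ∀ i (h : 0 < n i), V i * (V i)ᴴ = φ (piMatrixUnit ℂ i ⟨0, h⟩ ⟨0, h⟩))
    (i : Fin k) (a : Fin (n i)) :
    trace (φ (piMatrixUnit ℂ i a a)) = s i := by
  calc trace (φ (piMatrixUnit ℂ i a a))
      = trace (φ (piMatrixUnit ℂ i a ⟨0, a.pos⟩) * φ (piMatrixUnit ℂ i ⟨0, a.pos⟩ a)) := by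
        rw [← map_mul, piMatrixUnit_mul_piMatrixUnit]
    _ = trace (φ (piMatrixUnit ℂ i ⟨0, a.pos⟩ ⟨0, a.pos⟩)) := by
        rw [trace_mul_comm, ← map_mul, piMatrixUnit_mul_piMatrixUnit]
    _ = s i := by rw [← hQ, trace_mul_comm, hV, trace_one, Fintype.card_fin]

theorem sum_mul_eq_card_of_mul_conjTranspose_eq (hV : ∀ i, (V i)ᴴ * V i = 1)
    (hQ : ∀ i (h : 0 < n i), V i * (V i)ᴴ = φ (piMatrixUnit ℂ i ⟨0, h⟩ ⟨0, h⟩)) :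
    ∑ i, n i * s i = Fintype.card m := by
  apply Nat.cast_injective (R := ℂ)
  calc ((∑ i, n i * s i : ℕ) : ℂ) = ∑ i, ∑ a, trace (φ (piMatrixUnit ℂ i a a)) := by
        simp [trace_map_piMatrixUnit_self hV hQ]
    _ = trace (φ 1) := by simp only [← sum_piMatrixUnit_self, map_sum, trace_sum]
    _ = Fintype.card m := by rw [map_one, trace_one]

variable (φ) in
theorem StarAlgHom.exists_unitary_conj_blockAmpliation :
    ∃ s : Fin k → ℕ, ∑ i, n i * s i = Fintype.card m ∧
      ∃ (e : (Σ i, Fin (n i) × Fin (s i)) ≃ m) (U : Matrix m m ℂ), Uᴴ * U = 1 ∧ U * Uᴴ = 1 ∧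
        ∀ A, φ A = U * (blockAmpliation s A).submatrix e.symm e.symm * Uᴴ := by
  have hV (i : Fin k) : ∃ (s : ℕ) (V : Matrix m (Fin s) ℂ), Vᴴ * V = 1 ∧
      ∀ h : 0 < n i, V * Vᴴ = φ (piMatrixUnit ℂ i ⟨0, h⟩ ⟨0, h⟩) := by
    by_cases h : 0 < n i
    · obtain ⟨s, V, hV, hQ⟩ :=
        ((isStarProjection_piMatrixUnit i ⟨0, h⟩).map φ).exists_isometry_mul_conjTranspose_eq
      exact ⟨s, V, hV, fun _ => hQ⟩
    · exact ⟨0, 0, Subsingleton.elim _ _, fun h' => absurd h' h⟩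
  choose s V hV hQ using hV
  set W := blockIsometry φ V
  have hWA := conjTranspose_blockIsometry_mul_mul hV hQ
  have hW : Wᴴ * W = 1 := by rw [← blockAmpliation_one s, ← hWA, map_one, Matrix.mul_one]
  have hcard := sum_mul_eq_card_of_mul_conjTranspose_eq hV hQ
  let e : (Σ i, Fin (n i) × Fin (s i)) ≃ m :=
    Fintype.equivOfCardEq (by simp [Fintype.card_sigma, hcard])
  set U := W.submatrix id e.symm
  have hUW (X : Matrix m m ℂ) : Uᴴ * X * U = (Wᴴ * X * W).submatrix e.symm e.symm := by
    calc Uᴴ * X * U = Wᴴ.submatrix e.symm id * X.submatrix id id * W.submatrix id e.symm := by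
          rw [conjTranspose_submatrix, submatrix_id_id]
      _ = (Wᴴ * X * W).submatrix e.symm e.symm := by
          rw [← submatrix_mul _ _ _ _ _ Function.bijective_id,
            ← submatrix_mul _ _ _ _ _ Function.bijective_id]
  have hU : Uᴴ * U = 1 := by
    simpa only [Matrix.mul_one, hW, submatrix_one_equiv] using hUW 1
  have hU' : U * Uᴴ = 1 := mul_eq_one_comm.1 hU
  refine ⟨s, hcard, e, U, hU, hU', fun A => ?_⟩
  rw [← hWA A, ← hUW]
  calc φ A = (U * Uᴴ) * φ A * (U * Uᴴ) := by rw [hU', Matrix.one_mul, Matrix.mul_one]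
    _ = U * (Uᴴ * φ A * U) * Uᴴ := by simp only [Matrix.mul_assoc]

end Forward

/-- Bratteli's characterization of unital *-homomorphisms
    `f : ⊕ᵢ M_{nᵢ}(ℂ) → M_p(ℂ)`: a linear map `f` is a unital *-homomorphism
    iff there are multiplicities `s₁,…,s_k` with `Σᵢ nᵢsᵢ = p` (witnessed by a
    bijection `e : (Σ i, Fin (n i) × Fin (s i)) ≃ Fin p`) and a `p×p` unitary
    `U` such that `f(A₁,…,A_k) = U ((A₁⊗I_{s₁}) ⊕ … ⊕ (A_k⊗I_{s_k})) Uᴴ`. -/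
theorem bratteli_characterization (k p : ℕ) (n : Fin k → ℕ)
    (f : (∀ i : Fin k, Matrix (Fin (n i)) (Fin (n i)) ℂ) →ₗ[ℂ]
          Matrix (Fin p) (Fin p) ℂ) :
    ((∀ A B, f (A * B) = f A * f B) ∧ (∀ A, f (star A) = (f A)ᴴ) ∧ f 1 = 1)
      ↔ ∃ (s : Fin k → ℕ), (∑ i, n i * s i = p) ∧
          ∃ (e : (Σ i : Fin k, Fin (n i) × Fin (s i)) ≃ Fin p)
            (U : Matrix (Fin p) (Fin p) ℂ), Uᴴ * U = 1 ∧ U * Uᴴ = 1 ∧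
            ∀ A : ∀ i : Fin k, Matrix (Fin (n i)) (Fin (n i)) ℂ,
              f A = U * ((Matrix.blockDiagonal'
                  (fun i => A i ⊗ₖ (1 : Matrix (Fin (s i)) (Fin (s i)) ℂ))).submatrix
                    e.symm e.symm) * Uᴴ := by
  constructor
  · rintro ⟨hmul, hstar, hone⟩
    let φ : (∀ i : Fin k, Matrix (Fin (n i)) (Fin (n i)) ℂ) →⋆ₐ[ℂ] Matrix (Fin p) (Fin p) ℂ :=
      { AlgHom.ofLinearMap f hone hmul with map_star' := hstar }
    obtain ⟨s, hs, e, U, hU⟩ := φ.exists_unitary_conj_blockAmpliation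
    exact ⟨s, hs.trans (Fintype.card_fin p), e, U, hU⟩
  · rintro ⟨s, -, e, U, hU1, hU2, hf⟩
    exact map_mul_star_one_of_eq_conj_blockAmpliation hU1 hU2 hf
end

section
/- The multiplicities in Bratteli's normal form are unique: if all nᵢ > 0 and U((A₁⊗I_{s₁})⊕…⊕(A_k⊗I_{s_k}))Uᴴ = U'((A₁⊗I_{s'₁})⊕…⊕(A_k⊗I_{s'_k}))U'ᴴ for all (A₁,…,A_k) ∈ ⊕ᵢ M_{nᵢ}(ℂ), where U, U' are p×p unitaries, Σᵢnᵢsᵢ = Σᵢnᵢs'ᵢ = p, then sᵢ = s'ᵢ for all i. -/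
open Matrix Kronecker

lemma trace_submatrix_equiv' {m n R : Type*} [Fintype m] [Fintype n] [AddCommMonoid R]
    (f : n ≃ m) (A : Matrix m m R) : (A.submatrix f f).trace = A.trace := by
  simp only [Matrix.trace, Matrix.diag, Matrix.submatrix_apply]
  exact f.sum_comp (fun x => A x x)

/-- Uniqueness of the multiplicities in Bratteli's normal form: if all `nᵢ > 0`
    and `U ((A₁⊗I_{s₁})⊕…⊕(A_k⊗I_{s_k})) Uᴴ = U' ((A₁⊗I_{s'₁})⊕…⊕(A_k⊗I_{s'_k})) U'ᴴ`
    for all `(A₁,…,A_k)`, where `U, U'` are `p×p` unitaries and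
    `Σᵢnᵢsᵢ = Σᵢnᵢs'ᵢ = p` (witnessed by bijections onto `Fin p`), then
    `sᵢ = s'ᵢ` for all `i`. -/
theorem bratteli_multiplicities_unique (k p : ℕ) (n s s' : Fin k → ℕ)
    (hn : ∀ i, 0 < n i)
    (hs : ∑ i, n i * s i = p) (hs' : ∑ i, n i * s' i = p)
    (e : (Σ i : Fin k, Fin (n i) × Fin (s i)) ≃ Fin p)
    (e' : (Σ i : Fin k, Fin (n i) × Fin (s' i)) ≃ Fin p)
    (U U' : Matrix (Fin p) (Fin p) ℂ)
    (hU : Uᴴ * U = 1) (hU2 : U * Uᴴ = 1)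
    (hU' : U'ᴴ * U' = 1) (hU2' : U' * U'ᴴ = 1)
    (h : ∀ A : ∀ i : Fin k, Matrix (Fin (n i)) (Fin (n i)) ℂ,
      U * ((Matrix.blockDiagonal'
          (fun i => A i ⊗ₖ (1 : Matrix (Fin (s i)) (Fin (s i)) ℂ))).submatrix
            e.symm e.symm) * Uᴴ
        = U' * ((Matrix.blockDiagonal'
            (fun i => A i ⊗ₖ (1 : Matrix (Fin (s' i)) (Fin (s' i)) ℂ))).submatrix
              e'.symm e'.symm) * U'ᴴ) :
    ∀ i, s i = s' i := by
  intro i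
  set A : ∀ j, Matrix (Fin (n j)) (Fin (n j)) ℂ := Pi.single i 1 with hA
  have key := congrArg Matrix.trace (h A)
  have tr : ∀ (M : Matrix (Fin p) (Fin p) ℂ) (V : Matrix (Fin p) (Fin p) ℂ)
      (hV : Vᴴ * V = 1), (V * M * Vᴴ).trace = M.trace := by
    intro M V hV
    rw [Matrix.trace_mul_cycle, hV, Matrix.one_mul]
  rw [tr _ U hU, tr _ U' hU', trace_submatrix_equiv', trace_submatrix_equiv',
    Matrix.trace_blockDiagonal', Matrix.trace_blockDiagonal'] at key
  have comp : ∀ (t : Fin k → ℕ),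
      (∑ j, ((A j) ⊗ₖ
        (1 : Matrix (Fin (t j)) (Fin (t j)) ℂ)).trace) = (n i : ℂ) * (t i : ℂ) := by
    intro t
    rw [Finset.sum_eq_single i]
    · simp [hA, Matrix.trace_kronecker, Matrix.trace_one]
    · intro j _ hj
      simp [hA, Pi.single_eq_of_ne hj, Matrix.trace_kronecker]
    · simp
  rw [comp s, comp s'] at key
  have hni : (n i : ℂ) ≠ 0 := Nat.cast_ne_zero.mpr (hn i).ne'
  have := mul_left_cancel₀ hni key
  exact_mod_cast this
end
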